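/- arXiv:0711.1905 — 2 statements merged into one kernel-verified Lean document; each statement's English description precedes it below -/
import Mathlib

section
/- Let X = {0,1}^ℕ and define S_0(v) = v(2).v and S_1(v) = v(1).v (prepending the third, respectively second, symbol of v). Then the string u = 000(100)^∞ (i.e., u = 000100100100⋯) is in the set K of limits of the form lim_{k} S_{w_k}(x_k) with |w_k| → ∞, but u does not belong to ⋃_{w∈Σ} A_w, where A_w = {y : y = lim S_{w[n_k]}(y_k), n_k → ∞, (y_k) any sequence in X}. (Gestalt effect.) -/
open Filter Topology

/-- `wordComp S w` is the composition S_{w(n-1)} ∘ ⋯ ∘ S_{w(0)}. -/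
def wordComp {X α : Type*} (S : α → X → X) : List α → X → X
  | [], x => x
  | a :: l, x => wordComp S l (S a x)

/-- The prefix w[n] of an infinite strategy w. -/
def prefixWord {α : Type*} (w : ℕ → α) (n : ℕ) : List α :=
  List.ofFn (fun i : Fin n => w i)

/-- The two prepending operators on X = {0,1}^ℕ: S₀(v) = v(2).v and
S₁(v) = v(1).v  (`false` codes the symbol 0 and `true` the symbol 1). -/
def prependMap : Bool → (ℕ → Bool) → (ℕ → Bool)
  | false, v => fun k => match k with | 0 => v 2 | k + 1 => v k
  | true, v => fun k => match k with | 0 => v 1 | k + 1 => v k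

/-- K: the set of all limits lim S_{w_k}(x_k) with words of lengths → ∞. -/
def fullAttractorSlice : Set (ℕ → Bool) :=
  {y | ∃ (wk : ℕ → List Bool) (xk : ℕ → (ℕ → Bool)),
    Tendsto (fun k => (wk k).length) atTop atTop ∧
    Tendsto (fun k => wordComp prependMap (wk k) (xk k)) atTop (𝓝 y)}

/-- A_w: the set of limits lim S_{w[n_k]}(y_k), n_k → ∞. -/
def indivAttr (w : ℕ → Bool) : Set (ℕ → Bool) :=
  {y | ∃ (yk : ℕ → (ℕ → Bool)) (nk : ℕ → ℕ), Tendsto nk atTop atTop ∧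
    Tendsto (fun k => wordComp prependMap (prefixWord w (nk k)) (yk k)) atTop (𝓝 y)}

/-- The string u = 000(100)^∞. -/
def gestaltPoint : ℕ → Bool := fun k => decide (3 ≤ k ∧ k % 3 = 0)

/-!
Each `S_a` only copies coordinates: `S_a v = v ∘ σ_a` with `σ_a 0 = 2 - a` and `σ_a (k + 1) = k`.
Hence `S_{w[n]} x = x ∘ ρ_n` with `ρ_{n+1} = ρ_n ∘ σ_{w n}`, and since `u = 0001…`, a limit of
such points equal to `u` forces `ρ_n 3 ∉ {ρ_n 0, ρ_n 1}` for infinitely many `n`. Such an `n` ends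
with the letter `1` (`σ_0` identifies `0` and `3`), so `ρ_n` takes at most two values on
`{0, 1, 2}`; as every `σ_a` maps `{0, 1, 2}` into itself, the same two values bound
`ρ_m` on `{0, 1, 2}` for every `m ≥ n`.
For a second such index `m > n`, the values of `ρ_{m-1}` at `0, 1, 2` lie in a two-element set
and the last differs from the first two, so `ρ_m` is constant on `{0, 1, 2}`. For a third such
index `N > m`, `σ_a` maps `{0, …, 3}` into `{0, 1, 2}`, hence `ρ_N 0 = ρ_N 3`: a contradiction.

Membership in `K` needs no limit: `S_1 S_0^{n-1}` maps the `n`-fold shift of `u` back to `u`.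
-/

open Set

def prependIndex : Bool → ℕ → ℕ
  | false, 0 => 2
  | true, 0 => 1
  | _, k + 1 => k

lemma prependMap_eq_comp (a : Bool) (v : ℕ → Bool) : prependMap a v = v ∘ prependIndex a := by
  funext k; cases a <;> cases k <;> rfl

lemma prependIndex_mapsTo_Iic_two (a : Bool) : MapsTo (prependIndex a) (Iic 2) (Iic 2) := by
  intro k hk; cases a <;> rcases k with _ | _ | _ <;> simp_all [prependIndex]

lemma prependIndex_mapsTo_Iic_three (a : Bool) : MapsTo (prependIndex a) (Iic 3) (Iic 2) := by
  intro k hk; cases a <;> rcases k with _ | _ | _ <;> simp_all [prependIndex] <;> omega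

def wordIndex : List Bool → ℕ → ℕ
  | [] => id
  | a :: l => prependIndex a ∘ wordIndex l

lemma wordComp_prependMap (l : List Bool) (x : ℕ → Bool) :
    wordComp prependMap l x = x ∘ wordIndex l := by
  induction l generalizing x with
  | nil => rfl
  | cons a l ih => rw [wordComp, ih, prependMap_eq_comp]; rfl

lemma wordIndex_append (l₁ l₂ : List Bool) :
    wordIndex (l₁ ++ l₂) = wordIndex l₁ ∘ wordIndex l₂ := by
  induction l₁ with
  | nil => rfl
  | cons a l ih => rw [List.cons_append, wordIndex, wordIndex, ih]; rfl

abbrev prefixIndex (w : ℕ → Bool) (n : ℕ) : ℕ → ℕ := wordIndex (prefixWord w n)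

lemma prefixIndex_succ (w : ℕ → Bool) (n : ℕ) :
    prefixIndex w (n + 1) = prefixIndex w n ∘ prependIndex (w n) := by
  simp only [prefixIndex, prefixWord, List.ofFn_succ', List.concat_eq_append, wordIndex_append]
  rfl

lemma prefixIndex_image_Iic_two_antitone (w : ℕ → Bool) :
    Antitone fun n => prefixIndex w n '' Iic 2 := by
  refine antitone_nat_of_succ_le fun n => ?_
  rw [prefixIndex_succ, image_comp]
  exact image_mono (prependIndex_mapsTo_Iic_two _).image_subset

lemma prefixIndex_image_Iic_three_subset (w : ℕ → Bool) {m n : ℕ} (hmn : m < n) :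
    prefixIndex w n '' Iic 3 ⊆ prefixIndex w m '' Iic 2 := by
  obtain ⟨n, rfl⟩ := Nat.exists_eq_add_of_lt hmn
  rw [prefixIndex_succ, image_comp]
  exact (image_mono (prependIndex_mapsTo_Iic_three _).image_subset).trans
    (prefixIndex_image_Iic_two_antitone w (by omega))

lemma eq_true_of_prefixIndex_succ_ne (w : ℕ → Bool) (n : ℕ)
    (h : prefixIndex w (n + 1) 0 ≠ prefixIndex w (n + 1) 3) : w n = true := by
  rw [prefixIndex_succ] at h
  by_contra hw
  simp only [Bool.not_eq_true] at hw
  exact h (by simp [hw, prependIndex])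

lemma prependIndex_true_image_Iic_two : prependIndex true '' Iic 2 ⊆ {0, 1} := by
  rintro _ ⟨j, hj, rfl⟩
  rw [mem_Iic] at hj
  interval_cases j <;> simp [prependIndex]

lemma prefixIndex_succ_image_Iic_two_subset_pair (w : ℕ → Bool) {n : ℕ} (hw : w n = true) :
    prefixIndex w (n + 1) '' Iic 2 ⊆ {prefixIndex w n 0, prefixIndex w n 1} := by
  rw [prefixIndex_succ, hw, image_comp, ← image_pair]
  exact image_mono prependIndex_true_image_Iic_two

lemma prefixIndex_image_Iic_two_subsingleton (w : ℕ → Bool) {m n : ℕ} (hmn : m < n)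
    (hm : prefixIndex w (m + 1) 0 ≠ prefixIndex w (m + 1) 3)
    (hn₀ : prefixIndex w (n + 1) 0 ≠ prefixIndex w (n + 1) 3)
    (hn₁ : prefixIndex w (n + 1) 1 ≠ prefixIndex w (n + 1) 3) :
    (prefixIndex w (n + 1) '' Iic 2).Subsingleton := by
  have hwm := eq_true_of_prefixIndex_succ_ne w m hm
  have hwn := eq_true_of_prefixIndex_succ_ne w n hn₀
  have hpair : prefixIndex w n '' Iic 2 ⊆ {prefixIndex w m 0, prefixIndex w m 1} :=
    (prefixIndex_image_Iic_two_antitone w hmn).trans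
      (prefixIndex_succ_image_Iic_two_subset_pair w hwm)
  have h₀ := hpair (mem_image_of_mem _ (show 0 ∈ Iic 2 by simp))
  have h₁ := hpair (mem_image_of_mem _ (show 1 ∈ Iic 2 by simp))
  have h₂ := hpair (mem_image_of_mem _ (show 2 ∈ Iic 2 by simp))
  simp only [prefixIndex_succ, hwn, Function.comp_apply, prependIndex] at hn₀ hn₁
  have h01 : prefixIndex w n 0 = prefixIndex w n 1 := by
    simp only [mem_insert_iff, mem_singleton_iff] at h₀ h₁ h₂
    omega
  refine (subsingleton_singleton (a := prefixIndex w n 0)).anti ?_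
  refine (prefixIndex_succ_image_Iic_two_subset_pair w hwn).trans ?_
  simp [h01]

theorem not_frequently_prefixIndex_separates (w : ℕ → Bool) :
    ¬ ∃ᶠ n in atTop,
      prefixIndex w n 0 ≠ prefixIndex w n 3 ∧ prefixIndex w n 1 ≠ prefixIndex w n 3 := by
  rw [frequently_atTop]
  intro h
  obtain ⟨_ | m, hm1, hm, -⟩ := h 1
  · omega
  obtain ⟨_ | n, hn1, hn₀, hn₁⟩ := h (m + 3)
  · omega
  obtain ⟨N, hnN, hN, -⟩ := h (n + 3)
  have hsub := prefixIndex_image_Iic_three_subset w (show n + 1 < N by omega)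
  exact hN (prefixIndex_image_Iic_two_subsingleton w (by omega) hm hn₀ hn₁
    (hsub ⟨0, by simp, rfl⟩) (hsub ⟨3, by simp, rfl⟩))

theorem gestaltPoint_notMem_indivAttr (w : ℕ → Bool) : gestaltPoint ∉ indivAttr w := by
  rintro ⟨yk, nk, hnk, hlim⟩
  refine not_frequently_prefixIndex_separates w (hnk.frequently (Eventually.frequently ?_))
  have coord (j : ℕ) : ∀ᶠ k in atTop, yk k (prefixIndex w (nk k) j) = gestaltPoint j := by
    have := tendsto_pi_nhds.1 hlim j
    simpa only [wordComp_prependMap, Function.comp_apply, nhds_discrete, tendsto_pure] using this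
  filter_upwards [coord 0, coord 1, coord 3] with k h₀ h₁ h₃
  refine ⟨fun h => ?_, fun h => ?_⟩
  · rw [h, h₃] at h₀; exact absurd h₀ (by decide)
  · rw [h, h₃] at h₁; exact absurd h₁ (by decide)

lemma wordComp_map_reverse_range {X α : Type*} (S : α → X → X) (a : ℕ → α) (x : ℕ → X)
    (h : ∀ n, S (a n) (x (n + 1)) = x n) (n : ℕ) :
    wordComp S ((List.range n).reverse.map a) (x n) = x 0 := by
  induction n with
  | zero => rfl
  | succ n ih =>
    simp only [List.range_succ, List.reverse_append, List.reverse_singleton, List.singleton_append,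
      List.map_cons, wordComp, h, ih]

lemma prependMap_gestaltPoint_shift (n : ℕ) :
    prependMap (decide (n = 0)) (fun i => gestaltPoint (n + 1 + i)) =
      fun i => gestaltPoint (n + i) := by
  funext i
  rw [prependMap_eq_comp]
  rcases n with _ | n <;> rcases i with _ | i <;>
    simp only [Function.comp_apply, prependIndex, gestaltPoint, decide_true,
      Nat.add_one_ne_zero, decide_false] <;>
    congr 1 <;> ext <;> omega

theorem gestaltPoint_mem_fullAttractorSlice : gestaltPoint ∈ fullAttractorSlice := by
  refine ⟨fun n => (List.range n).reverse.map (fun m => decide (m = 0)),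
    fun n i => gestaltPoint (n + i), ?_, ?_⟩
  · simp only [List.length_map, List.length_reverse, List.length_range]
    exact tendsto_id
  · simp only [wordComp_map_reverse_range prependMap _ (fun n i => gestaltPoint (n + i))
      prependMap_gestaltPoint_shift, Nat.zero_add]
    exact tendsto_const_nhds

/-- Gestalt effect: u = 000(100)^∞ belongs to K but to no
individual attractor A_w. -/
theorem gestalt_effect :
    gestaltPoint ∈ fullAttractorSlice ∧
      ∀ w : ℕ → Bool, gestaltPoint ∉ indivAttr w :=
  ⟨gestaltPoint_mem_fullAttractorSlice, gestaltPoint_notMem_indivAttr⟩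
end

section
/- In the setting of the previous example (X = {0,1}^ℕ with the prepending maps S_0, S_1), the individual attractor A_w for the constant strategy w = 000⋯ is exactly the set of sequences of period 3 (sequences v with v(k+3) = v(k) for all k), and for w = 111⋯ it is exactly the set of sequences of period 2. -/
open Filter Topology

/-!
Iterating `S_b` on any sequence makes its first `n` entries periodic with period `3` (for
`b = 0`) or `2` (for `b = 1`): each step writes at position `0` the entry that now sits at that
period and shifts the rest. Limits of `S_b^[n_k] y_k` with `n_k → ∞` are therefore periodic.
Conversely a `p`-periodic `v` (with `p` that period) is a periodic point of `S_b` of period `p`,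
so the constant sequence `v = S_b^[p k] v` exhibits `v` as such a limit.
-/

open Function

def prependPeriod (b : Bool) : ℕ := cond b 2 3

lemma wordComp_replicate {X α : Type*} (S : α → X → X) (a : α) (n : ℕ) (x : X) :
    wordComp S (List.replicate n a) x = (S a)^[n] x := by
  induction n generalizing x with
  | zero => rfl
  | succ n ih => exact ih (S a x)

lemma prefixWord_const {α : Type*} (a : α) (n : ℕ) :
    prefixWord (fun _ => a) n = List.replicate n a :=
  List.ofFn_const n a

lemma prependMap_succ (b : Bool) (v : ℕ → Bool) (k : ℕ) :
    prependMap b v (k + 1) = v k := by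
  cases b <;> rfl

lemma prependMap_prependPeriod (b : Bool) (v : ℕ → Bool) :
    prependMap b v (prependPeriod b) = prependMap b v 0 := by
  cases b <;> rfl

lemma iterate_prependMap_add_prependPeriod (b : Bool) (x : ℕ → Bool) {n k : ℕ} (hk : k < n) :
    (prependMap b)^[n] x (k + prependPeriod b) = (prependMap b)^[n] x k := by
  induction n generalizing k with
  | zero => omega
  | succ n ih =>
    rw [iterate_succ_apply']
    cases k with
    | zero => simpa using prependMap_prependPeriod b _
    | succ j =>
      rw [Nat.add_right_comm, prependMap_succ, prependMap_succ, ih (by omega)]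

lemma isPeriodicPt_prependMap {b : Bool} {v : ℕ → Bool} (hv : Periodic v (prependPeriod b)) :
    IsPeriodicPt (prependMap b) (prependPeriod b) v := by
  cases b <;> funext k
  · match k with
    | 0 | 1 | 2 => rfl
    | k + 3 => exact (hv k).symm
  · match k with
    | 0 | 1 => rfl
    | k + 2 => exact (hv k).symm

lemma periodic_of_tendsto_iterate_prependMap {b : Bool} {v : ℕ → Bool} {y : ℕ → ℕ → Bool}
    {n : ℕ → ℕ} (hn : Tendsto n atTop atTop)
    (hlim : Tendsto (fun j => (prependMap b)^[n j] (y j)) atTop (𝓝 v)) :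
    Periodic v (prependPeriod b) := by
  intro k
  have hcoord : ∀ i, ∀ᶠ j in atTop, (prependMap b)^[n j] (y j) i = v i := fun i => by
    simpa [nhds_discrete] using tendsto_pi_nhds.mp hlim i
  obtain ⟨j, hshift, hk, hkn⟩ :=
    ((hcoord (k + prependPeriod b)).and ((hcoord k).and (hn.eventually_gt_atTop k))).exists
  rw [← hshift, ← hk, iterate_prependMap_add_prependPeriod b (y j) hkn]

lemma indivAttr_const (b : Bool) :
    indivAttr (fun _ => b) = {v | Periodic v (prependPeriod b)} := by
  ext v
  simp only [indivAttr, prefixWord_const, wordComp_replicate, Set.mem_ofPred_eq]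
  constructor
  · rintro ⟨y, n, hn, hlim⟩
    exact periodic_of_tendsto_iterate_prependMap hn hlim
  · intro hv
    have hpos : 0 < prependPeriod b := by cases b <;> decide
    refine ⟨fun _ => v, fun j => prependPeriod b * j,
      (strictMono_mul_left_of_pos hpos).tendsto_atTop, ?_⟩
    simp only [((isPeriodicPt_prependMap hv).mul_const _).eq]
    exact tendsto_const_nhds

/-- for the prepending maps on {0,1}^ℕ, the individual attractor
of the constant strategy 000⋯ is exactly the set of 3-periodic sequences, and
that of 111⋯ is exactly the set of 2-periodic sequences. -/
theorem indivAttr_constant_strategies :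
    indivAttr (fun _ => false) = {v : ℕ → Bool | ∀ k, v (k + 3) = v k} ∧
    indivAttr (fun _ => true) = {v : ℕ → Bool | ∀ k, v (k + 2) = v k} :=
  ⟨indivAttr_const false, indivAttr_const true⟩
end
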